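/- Trace-norm contraction of completely positive trace-nonincreasing Kraus maps: let K_1,…,K_m be d×d complex matrices with Σⱼ KⱼᴴKⱼ ≤ I in the Loewner order. Then for every d×d complex matrix A, ‖Σⱼ Kⱼ A Kⱼᴴ‖₁ ≤ ‖A‖₁. -/

import Mathlib

open Matrix
open scoped ComplexOrder

/-- The positive semidefinite square root of a matrix (defined to be `0` if the matrix is not
positive semidefinite). -/
noncomputable def matSqrt {d : ℕ} (A : Matrix (Fin d) (Fin d) ℂ) : Matrix (Fin d) (Fin d) ℂ :=
  open scoped Classical in
  if h : A.PosSemidef then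
    (h.1.eigenvectorUnitary : Matrix (Fin d) (Fin d) ℂ) *
      diagonal ((↑) ∘ (h.1.eigenvalues · |>.sqrt)) *
      (star h.1.eigenvectorUnitary : Matrix (Fin d) (Fin d) ℂ)
  else 0

/-- The trace norm `‖A‖₁ = Re (Tr √(AᴴA))` of a complex matrix. -/
noncomputable def traceNorm {d : ℕ} (A : Matrix (Fin d) (Fin d) ℂ) : ℝ :=
  (Matrix.trace (matSqrt (Aᴴ * A))).re

/-! The trace norm is attained on contractions: the polar decomposition `B = U |B|` gives
`‖B‖₁ = Re Tr (U* B)` with `‖U‖ ≤ 1`, while `Re Tr (W A) ≤ ‖A‖₁` for every contraction `W`.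
As `Tr (U* Σ Kⱼ A Kⱼ*) = Tr ((Σ Kⱼ* U* Kⱼ) A)`, it remains to see that the dual map
`W ↦ Σ Kⱼ* W Kⱼ` sends contractions to contractions, which follows from
`0 ≤ Σ (W Kⱼ - Kⱼ T)* (W Kⱼ - Kⱼ T)` with `T = Σ Kⱼ* W Kⱼ`. -/

open scoped Matrix.Norms.L2Operator MatrixOrder

section StarOrderedRing

variable {R : Type*} [Ring R] [StarRing R] [PartialOrder R] [StarOrderedRing R]

theorem star_mul_self_le_one_of_kraus {ι : Type*} [Fintype ι] {K : ι → R}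
    (hK : ∑ j, star (K j) * K j ≤ 1) {w : R} (hw : star w * w ≤ 1) :
    star (∑ j, star (K j) * w * K j) * (∑ j, star (K j) * w * K j) ≤ 1 := by
  generalize ht : ∑ j, star (K j) * w * K j = t
  have hst : ∑ j, star (K j) * star w * K j = star t := by
    simp [← ht, star_sum, star_mul, mul_assoc]
  have expand : ∑ j, star (w * K j - K j * t) * (w * K j - K j * t) =
      ∑ j, star (K j) * (star w * w) * K j - (∑ j, star (K j) * star w * K j) * t -
        star t * (∑ j, star (K j) * w * K j) + star t * (∑ j, star (K j) * K j) * t := by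
    simp only [Finset.sum_mul, Finset.mul_sum, ← Finset.sum_sub_distrib, ← Finset.sum_add_distrib]
    refine Finset.sum_congr rfl fun j _ => ?_
    simp only [star_sub, star_mul]
    noncomm_ring
  rw [hst, ht] at expand
  have hw_conj : ∑ j, star (K j) * (star w * w) * K j ≤ 1 :=
    (Finset.sum_le_sum fun j _ => by simpa using star_left_conjugate_le_conjugate hw (K j)).trans hK
  have hK_conj : star t * (∑ j, star (K j) * K j) * t ≤ star t * t := by
    simpa using star_left_conjugate_le_conjugate hK t
  have hnonneg : 0 ≤ ∑ j, star (w * K j - K j * t) * (w * K j - K j * t) :=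
    Finset.sum_nonneg fun j _ => star_mul_self_nonneg _
  rw [expand] at hnonneg
  refine sub_nonneg.mp ?_
  calc (0 : R) ≤ _ := hnonneg
    _ ≤ 1 - star t * t - star t * t + star t * t := by gcongr
    _ = 1 - star t * t := by abel

theorem star_mul_mul_add_star_le {m : R} (hm : star m * m ≤ 1) (s : R) :
    star s * m * s + star (star s * m * s) ≤ star s * s + star s * s := by
  have hnonneg : 0 ≤ star (s - m * s) * (s - m * s) := star_mul_self_nonneg _
  have hm_conj : star s * (star m * m) * s ≤ star s * s := by
    simpa using star_left_conjugate_le_conjugate hm s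
  have expand : star (s - m * s) * (s - m * s) =
      star s * s - (star s * m * s + star (star s * m * s)) + star s * (star m * m) * s := by
    simp only [star_sub, star_mul, star_star]
    noncomm_ring
  rw [expand, sub_add_eq_add_sub, sub_nonneg] at hnonneg
  exact hnonneg.trans (by gcongr)

end StarOrderedRing

section CStarAlgebra

variable {A : Type*} [CStarAlgebra A] [PartialOrder A] [StarOrderedRing A]

theorem norm_le_one_iff_star_mul_self_le_one {a : A} : ‖a‖ ≤ 1 ↔ star a * a ≤ 1 := by
  rw [← CStarAlgebra.norm_le_one_iff_of_nonneg (star a * a), CStarRing.norm_star_mul_self,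
    ← sq, sq_le_one_iff₀ (norm_nonneg a)]

theorem exists_polar_decomposition {a : A} (ha : (spectrum ℝ (CFC.abs a)).Finite) :
    ∃ u : A, ‖u‖ ≤ 1 ∧ star u * a = CFC.abs a ∧ u * CFC.abs a = a := by
  set p := CFC.abs a
  have hc (f : ℝ → ℝ) : ContinuousOn f (spectrum ℝ p) := ha.continuousOn f
  have hmul (f g : ℝ → ℝ) : cfc f p * cfc g p = cfc (fun x => f x * g x) p :=
    (cfc_mul f g p (hc f) (hc g)).symm
  have hsq : star a * a = cfc (fun x : ℝ => x * x) p := by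
    rw [← CFC.abs_mul_abs, ← hmul, cfc_id' ℝ p]
  -- the pseudo-inverse of `p`, as `(0 : ℝ)⁻¹ = 0`
  set q := cfc (·⁻¹ : ℝ → ℝ) p
  have hq : star q = q := (cfc_predicate _ p : IsSelfAdjoint q).star_eq
  refine ⟨a * q, ?_, ?_, ?_⟩
  · rw [norm_le_one_iff_star_mul_self_le_one, star_mul, hq, mul_assoc, ← mul_assoc (star a), hsq,
      hmul, hmul]
    refine cfc_le_one _ p fun x _ => ?_
    rcases eq_or_ne x 0 with rfl | hx
    · simp
    · simp [hx]
  · rw [star_mul, hq, mul_assoc, hsq, hmul]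
    conv_rhs => rw [← cfc_id' ℝ p]
    exact cfc_congr fun x _ => by simpa [mul_assoc] using inv_mul_mul_self x
  · have hker : a * cfc (fun x : ℝ => 1 - x⁻¹ * x) p = 0 := by
      rw [← CStarRing.star_mul_self_eq_zero_iff, star_mul, ← mul_assoc, mul_assoc _ (star a), hsq,
        (cfc_predicate _ p : IsSelfAdjoint (cfc _ p)).star_eq, hmul, hmul]
      refine (cfc_congr fun x _ => ?_).trans (cfc_const_zero ℝ p)
      rcases eq_or_ne x 0 with rfl | hx
      · simp
      · simp [hx]
    calc a * q * p = a * cfc (fun x : ℝ => x⁻¹ * x) p := by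
          rw [mul_assoc]
          conv_lhs => rw [← cfc_id' ℝ p]
          rw [hmul]
      _ = a - a * cfc (fun x : ℝ => 1 - x⁻¹ * x) p := by
          rw [cfc_sub (fun _ => 1) _ p (hc _) (hc _), cfc_const_one ℝ p, mul_sub, mul_one,
            sub_sub_cancel]
      _ = a := by rw [hker, sub_zero]

end CStarAlgebra

namespace Matrix

variable {n : Type*} [Fintype n]

theorem re_trace_le_re_trace {P Q : Matrix n n ℂ} (h : P ≤ Q) :
    P.trace.re ≤ Q.trace.re := by
  have := (Matrix.le_iff.mp h).trace_nonneg
  rw [trace_sub, sub_nonneg] at this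
  exact (Complex.le_def.mp this).1

theorem re_trace_mul_le_re_trace [DecidableEq n] {M P : Matrix n n ℂ} (hM : ‖M‖ ≤ 1)
    (hP : 0 ≤ P) :
    (M * P).trace.re ≤ P.trace.re := by
  set S := CFC.sqrt P
  have hS : Sᴴ = S := (CFC.sqrt_nonneg P).isSelfAdjoint.star_eq
  have hSS : S * S = P := CFC.sqrt_mul_sqrt_self P
  have key := re_trace_le_re_trace
    (star_mul_mul_add_star_le (norm_le_one_iff_star_mul_self_le_one.mp hM) S)
  simp only [star_eq_conjTranspose, trace_add, trace_conjTranspose, hS, hSS, Complex.add_re,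
    Complex.star_def, Complex.conj_re] at key
  rw [← hSS, ← mul_assoc, trace_mul_cycle, hSS]
  linarith

theorem re_trace_mul_le_re_trace_abs [DecidableEq n] {W : Matrix n n ℂ} (hW : ‖W‖ ≤ 1)
    (A : Matrix n n ℂ) :
    (W * A).trace.re ≤ (CFC.abs A).trace.re := by
  obtain ⟨V, hV, -, hVA⟩ := exists_polar_decomposition (a := A) finite_real_spectrum
  conv_lhs => rw [← hVA, ← mul_assoc]
  exact re_trace_mul_le_re_trace ((norm_mul_le W V).trans (mul_le_one₀ hW (norm_nonneg V) hV))
    (CFC.abs_nonneg A)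

theorem trace_mul_sum_mul_mul {α ι : Type*} [CommSemiring α] [Fintype ι] (W A : Matrix n n α)
    (K L : ι → Matrix n n α) :
    (W * ∑ j, K j * A * L j).trace = ((∑ j, L j * W * K j) * A).trace := by
  simp only [Matrix.mul_sum, Matrix.sum_mul, trace_sum]
  refine Finset.sum_congr rfl fun j _ => ?_
  rw [← mul_assoc, ← mul_assoc, trace_mul_cycle]
  simp only [Matrix.mul_assoc]

end Matrix

theorem matSqrt_eq_sqrt {d : ℕ} {A : Matrix (Fin d) (Fin d) ℂ} (hA : A.PosSemidef) :
    matSqrt A = CFC.sqrt A := by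
  rw [matSqrt, dif_pos hA, CFC.sqrt_eq_real_sqrt A hA.nonneg, cfcₙ_eq_cfc, hA.1.cfc_eq]
  rfl

theorem traceNorm_eq_re_trace_abs {d : ℕ} (A : Matrix (Fin d) (Fin d) ℂ) :
    traceNorm A = (CFC.abs A).trace.re :=
  congrArg (fun M => M.trace.re) (matSqrt_eq_sqrt (posSemidef_conjTranspose_mul_self A))

theorem stmt18_general {d m : ℕ} (K : Fin m → Matrix (Fin d) (Fin d) ℂ)
    (hK : ((1 : Matrix (Fin d) (Fin d) ℂ) - ∑ j, (K j)ᴴ * K j).PosSemidef) :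
    ∀ A : Matrix (Fin d) (Fin d) ℂ,
      traceNorm (∑ j, K j * A * (K j)ᴴ) ≤ traceNorm A := by
  intro A
  obtain ⟨U, hU, hUB, -⟩ :=
    exists_polar_decomposition (a := ∑ j, K j * A * (K j)ᴴ) finite_real_spectrum
  have hX : ‖∑ j, (K j)ᴴ * star U * K j‖ ≤ 1 := by
    rw [norm_le_one_iff_star_mul_self_le_one]
    refine star_mul_self_le_one_of_kraus (Matrix.le_iff.mpr hK) ?_
    rwa [← norm_le_one_iff_star_mul_self_le_one, norm_star]
  rw [traceNorm_eq_re_trace_abs, traceNorm_eq_re_trace_abs, ← hUB, trace_mul_sum_mul_mul]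
  exact re_trace_mul_le_re_trace_abs hX A

/-- Trace-norm contraction of completely positive trace-nonincreasing Kraus maps: if
`Σⱼ KⱼᴴKⱼ ≤ I` in the Loewner order, then `‖Σⱼ Kⱼ A Kⱼᴴ‖₁ ≤ ‖A‖₁` for every matrix `A`. -/
theorem stmt18 {d m : ℕ} (hd : 1 ≤ d) (K : Fin m → Matrix (Fin d) (Fin d) ℂ)
    (hK : ((1 : Matrix (Fin d) (Fin d) ℂ) - ∑ j, (K j)ᴴ * K j).PosSemidef) :
    ∀ A : Matrix (Fin d) (Fin d) ℂ,
      traceNorm (∑ j, K j * A * (K j)ᴴ) ≤ traceNorm A :=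
  stmt18_general K hK
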